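/- Suppose W ⊂ C(Ω) is a class of real continuous functions that has the quasi-algebra property with parameter a and has Property A. Then for any m ∈ ℕ: (1/2) κ_m(W) ≤ er_m^o(W, L_2) ≤ a κ_m(W), and (1/2) κ_m^Q(W) ≤ er_m(W, L_2) ≤ a κ_m^Q(W). -/
import Mathlib


open MeasureTheory Real
open scoped ENNReal

/-- The sampling discretization error `er_m(W, L_2)` with equal weights `1/m`. -/
noncomputable def erL2 {Ω : Type*} [MeasurableSpace Ω] (μ : Measure Ω)
    (W : Set (Ω → ℝ)) (m : ℕ) : ℝ :=
  ⨅ ξ : Fin m → Ω, ⨆ f : W,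
    |(∫ x, (f : Ω → ℝ) x ^ 2 ∂μ) - (1 / (m : ℝ)) * ∑ j, (f : Ω → ℝ) (ξ j) ^ 2|

/-- The weighted sampling discretization error `er_m^o(W, L_2)`. -/
noncomputable def erL2Weighted {Ω : Type*} [MeasurableSpace Ω] (μ : Measure Ω)
    (W : Set (Ω → ℝ)) (m : ℕ) : ℝ :=
  ⨅ ξ : Fin m → Ω, ⨅ lam : Fin m → ℝ, ⨆ f : W,
    |(∫ x, (f : Ω → ℝ) x ^ 2 ∂μ) - ∑ j, lam j * (f : Ω → ℝ) (ξ j) ^ 2|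

/-- The best error of numerical integration with `m` knots (general weights). -/
noncomputable def kappaInt {Ω : Type*} [MeasurableSpace Ω] (μ : Measure Ω)
    (W : Set (Ω → ℝ)) (m : ℕ) : ℝ :=
  ⨅ ξ : Fin m → Ω, ⨅ lam : Fin m → ℝ, ⨆ f : W,
    |(∫ x, (f : Ω → ℝ) x ∂μ) - ∑ j, lam j * (f : Ω → ℝ) (ξ j)|

/-- The best error of numerical integration by Quasi-Monte Carlo methods with `m` knots. -/
noncomputable def kappaIntQ {Ω : Type*} [MeasurableSpace Ω] (μ : Measure Ω)
    (W : Set (Ω → ℝ)) (m : ℕ) : ℝ :=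
  ⨅ ξ : Fin m → Ω, ⨆ f : W,
    |(∫ x, (f : Ω → ℝ) x ∂μ) - (1 / (m : ℝ)) * ∑ j, (f : Ω → ℝ) (ξ j)|

/-- Property A: for any `f ∈ W`, both `(f+1)/2` and `(f-1)/2` belong to `W`. -/
def PropertyA {Ω : Type*} (W : Set (Ω → ℝ)) : Prop :=
  ∀ f ∈ W, (fun x => (f x + 1) / 2) ∈ W ∧ (fun x => (f x - 1) / 2) ∈ W

set_option linter.unusedSectionVars false

section Core
variable {X : Type*} [MeasurableSpace X] [TopologicalSpace X] [CompactSpace X]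
  [T2Space X] [OpensMeasurableSpace X]

lemma core_both (μ : Measure X) [IsFiniteMeasure μ]
    (W : Set (X → ℝ)) (hWcont : ∀ f ∈ W, Continuous f)
    (a : ℝ) (ha : 0 < a)
    (hQA : ∀ f ∈ W, ∀ g ∈ W, (fun x => f x * g x / a) ∈ W)
    (hA : PropertyA W) {m : ℕ} (ξ : Fin m → X) (lam : Fin m → ℝ) :
    (⨆ f : W, |(∫ x, (f : X → ℝ) x ^ 2 ∂μ) - ∑ j, lam j * (f : X → ℝ) (ξ j) ^ 2|)
      ≤ a * ⨆ f : W, |(∫ x, (f : X → ℝ) x ∂μ) - ∑ j, lam j * (f : X → ℝ) (ξ j)| ∧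
    (⨆ f : W, |(∫ x, (f : X → ℝ) x ∂μ) - ∑ j, lam j * (f : X → ℝ) (ξ j)|)
      ≤ 2 * ⨆ f : W, |(∫ x, (f : X → ℝ) x ^ 2 ∂μ) - ∑ j, lam j * (f : X → ℝ) (ξ j) ^ 2| := by
  set D : W → ℝ := fun f =>
    |(∫ x, (f : X → ℝ) x ^ 2 ∂μ) - ∑ j, lam j * (f : X → ℝ) (ξ j) ^ 2| with hD
  set I : W → ℝ := fun f =>
    |(∫ x, (f : X → ℝ) x ∂μ) - ∑ j, lam j * (f : X → ℝ) (ξ j)| with hI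
  -- disc in terms of int of the square function
  have key1 : ∀ f : W, ∃ g : W, D f = a * I g := by
    rintro ⟨f, hf⟩
    refine ⟨⟨fun x => f x * f x / a, hQA f hf f hf⟩, ?_⟩
    simp only [hD, hI]
    have h1 : ∀ x, f x ^ 2 = a * (f x * f x / a) := by
      intro x
      rw [mul_div_assoc', mul_comm a, mul_div_assoc, div_self ha.ne', mul_one, sq]
    have h2 : (∫ x, f x ^ 2 ∂μ) = a * ∫ x, f x * f x / a ∂μ := by
      simp_rw [h1]; rw [integral_const_mul]
    have h3 : (∑ j, lam j * f (ξ j) ^ 2)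
        = a * ∑ j, lam j * (f (ξ j) * f (ξ j) / a) := by
      rw [Finset.mul_sum]
      refine Finset.sum_congr rfl fun j _ => ?_
      rw [h1 (ξ j)]; ring
    rw [h2, h3, ← mul_sub, abs_mul, abs_of_pos ha]
  -- int in terms of two disc terms
  have key2 : ∀ f : W, ∃ u v : W, I f ≤ D u + D v := by
    rintro ⟨f, hf⟩
    obtain ⟨hu, hv⟩ := hA f hf
    refine ⟨⟨_, hu⟩, ⟨_, hv⟩, ?_⟩
    simp only [hD, hI]
    have hcu : Continuous (fun x => (f x + 1) / 2) := hWcont _ hu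
    have hcv : Continuous (fun x => (f x - 1) / 2) := hWcont _ hv
    have hiu : Integrable (fun x => ((f x + 1) / 2) ^ 2) μ :=
      ((hcu.pow 2).integrable_of_hasCompactSupport (HasCompactSupport.of_compactSpace _))
    have hiv : Integrable (fun x => ((f x - 1) / 2) ^ 2) μ :=
      ((hcv.pow 2).integrable_of_hasCompactSupport (HasCompactSupport.of_compactSpace _))
    have hfx : ∀ x, f x = ((f x + 1) / 2) ^ 2 - ((f x - 1) / 2) ^ 2 := by
      intro x; ring
    have hint : (∫ x, f x ∂μ)
        = (∫ x, ((f x + 1) / 2) ^ 2 ∂μ) - ∫ x, ((f x - 1) / 2) ^ 2 ∂μ := by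
      rw [← integral_sub hiu hiv]
      exact integral_congr_ae (Filter.Eventually.of_forall fun x => hfx x)
    have hsum : (∑ j, lam j * f (ξ j))
        = (∑ j, lam j * ((f (ξ j) + 1) / 2) ^ 2) - ∑ j, lam j * ((f (ξ j) - 1) / 2) ^ 2 := by
      rw [← Finset.sum_sub_distrib]
      exact Finset.sum_congr rfl fun j _ => by rw [hfx (ξ j)]; ring
    calc |(∫ x, f x ∂μ) - ∑ j, lam j * f (ξ j)|
        = |((∫ x, ((f x + 1) / 2) ^ 2 ∂μ) - ∑ j, lam j * ((f (ξ j) + 1) / 2) ^ 2)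
            - ((∫ x, ((f x - 1) / 2) ^ 2 ∂μ) - ∑ j, lam j * ((f (ξ j) - 1) / 2) ^ 2)| := by
          rw [hint, hsum]; congr 1; ring
      _ ≤ _ := by exact (abs_sub _ _)
  have hDnn : ∀ f, 0 ≤ D f := fun f => abs_nonneg _
  have hInn : ∀ f, 0 ≤ I f := fun f => abs_nonneg _
  -- boundedness transfer
  have hbdd : BddAbove (Set.range I) ↔ BddAbove (Set.range D) := by
    constructor
    · rintro ⟨M, hM⟩
      refine ⟨a * M, ?_⟩
      rintro _ ⟨f, rfl⟩
      obtain ⟨g, hg⟩ := key1 f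
      rw [hg]
      exact mul_le_mul_of_nonneg_left (hM ⟨g, rfl⟩) ha.le
    · rintro ⟨M, hM⟩
      refine ⟨M + M, ?_⟩
      rintro _ ⟨f, rfl⟩
      obtain ⟨u, v, huv⟩ := key2 f
      exact huv.trans (add_le_add (hM ⟨u, rfl⟩) (hM ⟨v, rfl⟩))
  constructor
  · by_cases hb : BddAbove (Set.range I)
    · refine Real.iSup_le (fun f => ?_) (mul_nonneg ha.le (Real.iSup_nonneg hInn))
      obtain ⟨g, hg⟩ := key1 f
      show D f ≤ a * iSup I
      rw [hg]
      exact mul_le_mul_of_nonneg_left (le_ciSup hb g) ha.le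
    · have hb' : ¬BddAbove (Set.range D) := fun h => hb (hbdd.mpr h)
      rw [Real.iSup_of_not_bddAbove hb', Real.iSup_of_not_bddAbove hb, mul_zero]
  · by_cases hb : BddAbove (Set.range D)
    · refine Real.iSup_le (fun f => ?_)
        (mul_nonneg (by norm_num) (Real.iSup_nonneg hDnn))
      obtain ⟨u, v, huv⟩ := key2 f
      show I f ≤ 2 * iSup D
      calc I f ≤ D u + D v := huv
        _ ≤ iSup D + iSup D := add_le_add (le_ciSup hb u) (le_ciSup hb v)
        _ = 2 * iSup D := by ring
    · have hb' : ¬BddAbove (Set.range I) := fun h => hb (hbdd.mp h)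
      rw [Real.iSup_of_not_bddAbove hb', Real.iSup_of_not_bddAbove hb, mul_zero]

end Core

lemma inf_glue {ι : Sort*} (F G : ι → ℝ) (a : ℝ) (ha : 0 ≤ a)
    (hF : ∀ i, 0 ≤ F i) (hG : ∀ i, 0 ≤ G i)
    (h1 : ∀ i, F i ≤ a * G i) (h2 : ∀ i, G i ≤ 2 * F i) :
    (1 / 2) * (⨅ i, G i) ≤ (⨅ i, F i) ∧ (⨅ i, F i) ≤ a * ⨅ i, G i := by
  cases isEmpty_or_nonempty ι with
  | inl h =>
    rw [Real.iInf_of_isEmpty, Real.iInf_of_isEmpty]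
    norm_num
  | inr h =>
    have hbF : BddBelow (Set.range F) := ⟨0, by rintro _ ⟨i, rfl⟩; exact hF i⟩
    have hbG : BddBelow (Set.range G) := ⟨0, by rintro _ ⟨i, rfl⟩; exact hG i⟩
    constructor
    · rw [Real.mul_iInf_of_nonneg (by norm_num : (0:ℝ) ≤ 1/2)]
      refine le_ciInf fun i => ?_
      refine (ciInf_le ⟨0, ?_⟩ i).trans (by linarith [h2 i])
      rintro _ ⟨i, rfl⟩
      exact mul_nonneg (by norm_num) (hG i)
    · rw [Real.mul_iInf_of_nonneg ha]
      exact le_ciInf fun i => (ciInf_le hbF i).trans (h1 i)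

theorem discretization_equiv_integration
    {d : ℕ} (Ω : Set (EuclideanSpace ℝ (Fin d))) (hΩ : IsCompact Ω)
    (μ : Measure Ω) [IsProbabilityMeasure μ]
    (W : Set (Ω → ℝ)) (hWcont : ∀ f ∈ W, Continuous f)
    (a : ℝ) (ha : 0 < a)
    (hQA : ∀ f ∈ W, ∀ g ∈ W, (fun x => f x * g x / a) ∈ W)
    (hA : PropertyA W) (m : ℕ) :
    ((1 / 2) * kappaInt μ W m ≤ erL2Weighted μ W m ∧
        erL2Weighted μ W m ≤ a * kappaInt μ W m) ∧
      ((1 / 2) * kappaIntQ μ W m ≤ erL2 μ W m ∧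
        erL2 μ W m ≤ a * kappaIntQ μ W m) := by
  have hcs : CompactSpace Ω := isCompact_iff_compactSpace.mp hΩ
  set S : (Fin m → Ω) → (Fin m → ℝ) → ℝ := fun ξ lam =>
    ⨆ f : W, |(∫ x, (f : Ω → ℝ) x ^ 2 ∂μ) - ∑ j, lam j * (f : Ω → ℝ) (ξ j) ^ 2| with hS
  set K : (Fin m → Ω) → (Fin m → ℝ) → ℝ := fun ξ lam =>
    ⨆ f : W, |(∫ x, (f : Ω → ℝ) x ∂μ) - ∑ j, lam j * (f : Ω → ℝ) (ξ j)| with hK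
  have hcore : ∀ ξ lam, S ξ lam ≤ a * K ξ lam ∧ K ξ lam ≤ 2 * S ξ lam :=
    fun ξ lam => core_both μ W hWcont a ha hQA hA ξ lam
  have hSnn : ∀ ξ lam, 0 ≤ S ξ lam := fun _ _ => Real.iSup_nonneg fun _ => abs_nonneg _
  have hKnn : ∀ ξ lam, 0 ≤ K ξ lam := fun _ _ => Real.iSup_nonneg fun _ => abs_nonneg _
  have hinner : ∀ ξ, (1 / 2) * (⨅ lam, K ξ lam) ≤ (⨅ lam, S ξ lam) ∧
      (⨅ lam, S ξ lam) ≤ a * ⨅ lam, K ξ lam :=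
    fun ξ => inf_glue (S ξ) (K ξ) a ha.le (hSnn ξ) (hKnn ξ)
      (fun lam => (hcore ξ lam).1) (fun lam => (hcore ξ lam).2)
  have houter := inf_glue (fun ξ => ⨅ lam, S ξ lam) (fun ξ => ⨅ lam, K ξ lam) a ha.le
    (fun ξ => Real.iInf_nonneg (hSnn ξ)) (fun ξ => Real.iInf_nonneg (hKnn ξ))
    (fun ξ => (hinner ξ).2) (fun ξ => by linarith [(hinner ξ).1])
  have houterQ := inf_glue (fun ξ => S ξ (fun _ => 1 / (m : ℝ)))
    (fun ξ => K ξ (fun _ => 1 / (m : ℝ))) a ha.le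
    (fun ξ => hSnn ξ _) (fun ξ => hKnn ξ _)
    (fun ξ => (hcore ξ _).1) (fun ξ => (hcore ξ _).2)
  have e1 : erL2Weighted μ W m = ⨅ ξ, ⨅ lam, S ξ lam := rfl
  have e2 : kappaInt μ W m = ⨅ ξ, ⨅ lam, K ξ lam := rfl
  have e3 : erL2 μ W m = ⨅ ξ, S ξ (fun _ => 1 / (m : ℝ)) := by
    rw [erL2, hS]
    simp_rw [Finset.mul_sum]
  have e4 : kappaIntQ μ W m = ⨅ ξ, K ξ (fun _ => 1 / (m : ℝ)) := by
    rw [kappaIntQ, hK]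
    simp_rw [Finset.mul_sum]
  rw [e1, e2, e3, e4]
  exact ⟨houter, houterQ⟩
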